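/- arXiv:1108.5627 — 8 statements merged into one kernel-verified Lean document; each statement's English description precedes it below -/
import Mathlib

section
/- If Γ = {γ_k} is a B-multiplier sequence for a simple set of polynomials B, then for every positive integer m, the sequence {γ_k^m} is also a B-multiplier sequence. -/
open Polynomial

/-- A real polynomial has only real zeros: either it is the zero polynomial
(by convention), or every complex root is real. -/
def RealRooted (p : Polynomial ℝ) : Prop :=
  p = 0 ∨ ∀ z : ℂ, Polynomial.aeval z p = 0 → z.im = 0

/-- A simple set of polynomials: deg b_k = k for all k. -/
def SimpleSet (B : ℕ → Polynomial ℝ) : Prop :=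
  ∀ k, (B k).degree = (k : ℕ)

/-- γ is a B-multiplier sequence: applying γ to B-expansion coefficients of any
polynomial with only real zeros yields a polynomial with only real zeros. -/
def IsMultSeq (B : ℕ → Polynomial ℝ) (γ : ℕ → ℝ) : Prop :=
  ∀ (n : ℕ) (a : ℕ → ℝ),
    RealRooted (∑ k ∈ Finset.range (n + 1), Polynomial.C (a k) * B k) →
    RealRooted (∑ k ∈ Finset.range (n + 1), Polynomial.C (a k * γ k) * B k)

/-- A classical multiplier sequence: multiplier sequence for the standard basis. -/
def ClassicalMS (γ : ℕ → ℝ) : Prop :=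
  IsMultSeq (fun k => Polynomial.X ^ k) γ

namespace IsMultSeq

variable {B : ℕ → Polynomial ℝ} {γ δ : ℕ → ℝ}

theorem one : IsMultSeq B 1 := by
  intro n a h
  simpa using h

theorem mul (hγ : IsMultSeq B γ) (hδ : IsMultSeq B δ) : IsMultSeq B (γ * δ) := by
  intro n a h
  simpa only [Pi.mul_apply, mul_assoc] using hδ n (fun k => a k * γ k) (hγ n a h)

theorem pow (hγ : IsMultSeq B γ) : ∀ m : ℕ, IsMultSeq B (γ ^ m)
  | 0 => by simpa only [pow_zero] using one
  | m + 1 => by simpa only [pow_succ] using (hγ.pow m).mul hγ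

end IsMultSeq

theorem stmt_0_general (B : ℕ → Polynomial ℝ) (γ : ℕ → ℝ)
    (hγ : IsMultSeq B γ) (m : ℕ) :
    IsMultSeq B (fun k => γ k ^ m) :=
  hγ.pow m

theorem stmt_0 (B : ℕ → Polynomial ℝ) (hB : SimpleSet B) (γ : ℕ → ℝ)
    (hγ : IsMultSeq B γ) (m : ℕ) (hm : 1 ≤ m) :
    IsMultSeq B (fun k => γ k ^ m) :=
  stmt_0_general B γ hγ m
end

section
/- Let Q = {q_k} be a simple set of polynomials, {c_k} a sequence of nonzero real numbers, α a nonzero real, and β a real number. Define q̂_k(x) = c_k q_k(αx + β). Then a real sequence {γ_k} is a Q-multiplier sequence if and only if it is a Q̂-multiplier sequence, where Q̂ = {q̂_k}. -/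
open Polynomial

/-
Both ingredients act on each term of a Q-expansion separately. Rescaling q_k by c_k ≠ 0 only
reparametrises the coefficient sequences, a_k ↦ a_k c_k, and commutes with multiplication by γ_k.
Substituting x ↦ αx + β turns the expansion of p into p(αx + β), and an invertible real affine
substitution maps the zeros of a polynomial bijectively onto the zeros of the new one, keeping the
real ones real and the non-real ones non-real.
-/

namespace Polynomial

lemma affine_comp_affine_inv {K : Type*} [Field K] {α : K} (hα : α ≠ 0) (β : K) :
    (C α * X + C β).comp (C α⁻¹ * X + C (-(α⁻¹ * β))) = X := by
  simp only [add_comp, mul_comp, C_comp, X_comp]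
  rw [mul_add, ← mul_assoc, ← C_mul, ← C_mul, mul_inv_cancel₀ hα, C_1, one_mul, mul_neg,
    ← mul_assoc, mul_inv_cancel₀ hα, one_mul, C_neg, neg_add_cancel_right]

lemma finset_sum_C_mul_comp {R ι : Type*} [CommSemiring R] (s : Finset ι) (a : ι → R)
    (B : ι → R[X]) (q : R[X]) :
    ∑ k ∈ s, C (a k) * (B k).comp q = (∑ k ∈ s, C (a k) * B k).comp q := by
  simp only [sum_comp, mul_comp, C_comp]

end Polynomial

open Polynomial

lemma RealRooted.comp_affine {p : ℝ[X]} (hp : RealRooted p) {α : ℝ} (hα : α ≠ 0) (β : ℝ) :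
    RealRooted (p.comp (C α * X + C β)) := by
  rcases hp with rfl | hp
  · exact Or.inl zero_comp
  refine Or.inr fun z hz => ?_
  have hroot : aeval ((α : ℂ) * z + β) p = 0 := by simpa [aeval_comp] using hz
  have him : ((α : ℂ) * z + β).im = α * z.im := by simp
  exact (mul_eq_zero.mp (him ▸ hp _ hroot)).resolve_left hα

lemma realRooted_comp_affine_iff (p : ℝ[X]) {α : ℝ} (hα : α ≠ 0) (β : ℝ) :
    RealRooted (p.comp (C α * X + C β)) ↔ RealRooted p := by
  refine ⟨fun h => ?_, fun h => h.comp_affine hα β⟩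
  have h' := h.comp_affine (inv_ne_zero hα) (-(α⁻¹ * β))
  rwa [comp_assoc, affine_comp_affine_inv hα, comp_X] at h'

lemma isMultSeq_comp_iff (B : ℕ → ℝ[X]) (γ : ℕ → ℝ) {q : ℝ[X]}
    (hq : ∀ p : ℝ[X], RealRooted (p.comp q) ↔ RealRooted p) :
    IsMultSeq (fun k => (B k).comp q) γ ↔ IsMultSeq B γ := by
  simp only [IsMultSeq, finset_sum_C_mul_comp, hq]

lemma IsMultSeq.C_mul {B : ℕ → ℝ[X]} {γ : ℕ → ℝ} (h : IsMultSeq B γ) (c : ℕ → ℝ) :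
    IsMultSeq (fun k => C (c k) * B k) γ := by
  have rescale : ∀ (n : ℕ) (a : ℕ → ℝ), ∑ k ∈ Finset.range (n + 1), C (a k) * (C (c k) * B k) =
      ∑ k ∈ Finset.range (n + 1), C (a k * c k) * B k := fun n a =>
    Finset.sum_congr rfl fun k _ => by rw [Polynomial.C_mul, mul_assoc]
  intro n a ha
  rw [rescale] at ha ⊢
  simpa only [mul_right_comm _ (γ _)] using h n (fun k => a k * c k) ha

lemma isMultSeq_C_mul_iff (B : ℕ → ℝ[X]) (γ : ℕ → ℝ) {c : ℕ → ℝ} (hc : ∀ k, c k ≠ 0) :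
    IsMultSeq (fun k => C (c k) * B k) γ ↔ IsMultSeq B γ := by
  refine ⟨fun h => ?_, fun h => h.C_mul c⟩
  have unscale : (fun k => C (c k)⁻¹ * (C (c k) * B k)) = B := funext fun k => by
    rw [← mul_assoc, ← Polynomial.C_mul, inv_mul_cancel₀ (hc k), C_1, one_mul]
  simpa only [unscale] using h.C_mul fun k => (c k)⁻¹

theorem stmt_1_general (Q : ℕ → Polynomial ℝ)
    (c : ℕ → ℝ) (hc : ∀ k, c k ≠ 0) (α β : ℝ) (hα : α ≠ 0)
    (Qhat : ℕ → Polynomial ℝ)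
    (hQhat : ∀ k, Qhat k =
      Polynomial.C (c k) * (Q k).comp (Polynomial.C α * Polynomial.X + Polynomial.C β))
    (γ : ℕ → ℝ) :
    IsMultSeq Q γ ↔ IsMultSeq Qhat γ := by
  obtain rfl : Qhat = fun k => C (c k) * (Q k).comp (C α * X + C β) := funext hQhat
  rw [isMultSeq_C_mul_iff (fun k => (Q k).comp (C α * X + C β)) γ hc,
    isMultSeq_comp_iff Q γ fun p => realRooted_comp_affine_iff p hα β]

theorem stmt_1 (Q : ℕ → Polynomial ℝ) (hQ : SimpleSet Q)
    (c : ℕ → ℝ) (hc : ∀ k, c k ≠ 0) (α β : ℝ) (hα : α ≠ 0)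
    (Qhat : ℕ → Polynomial ℝ)
    (hQhat : ∀ k, Qhat k =
      Polynomial.C (c k) * (Q k).comp (Polynomial.C α * Polynomial.X + Polynomial.C β))
    (γ : ℕ → ℝ) :
    IsMultSeq Q γ ↔ IsMultSeq Qhat γ :=
  stmt_1_general Q c hc α β hα Qhat hQhat γ
end

section
/- Let B be a simple set of polynomials such that every classical multiplier sequence is a B-multiplier sequence. Then there exists α > 1 such that both {α^k} and {(1/α)^k} are B-multiplier sequences. -/
open Polynomial

/-
Every geometric sequence {α^k} with α ≠ 0 is a classical multiplier sequence: applying it to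
the coefficients of p gives p(αx), whose zeros are those of p divided by α.
-/

theorem RealRooted.comp_C_mul_X {p : ℝ[X]} (hp : RealRooted p) {α : ℝ} (hα : α ≠ 0) :
    RealRooted (p.comp (C α * X)) := by
  rcases hp with rfl | hp
  · exact Or.inl zero_comp
  · refine Or.inr fun z hz => ?_
    have hroot : aeval ((α : ℂ) * z) p = 0 := by simpa [aeval_comp] using hz
    have him : α * z.im = 0 := by simpa [Complex.mul_im] using hp _ hroot
    exact (mul_eq_zero.mp him).resolve_left hα

theorem sum_C_mul_pow_mul_X_pow {R : Type*} [CommSemiring R] (s : Finset ℕ)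
    (a : ℕ → R) (α : R) :
    ∑ k ∈ s, C (a k * α ^ k) * X ^ k = (∑ k ∈ s, C (a k) * X ^ k).comp (C α * X) := by
  simp [sum_comp, mul_pow, mul_assoc]

theorem classicalMS_pow {α : ℝ} (hα : α ≠ 0) : ClassicalMS (fun k => α ^ k) := by
  intro n a hp
  rw [sum_C_mul_pow_mul_X_pow]
  exact hp.comp_C_mul_X hα

theorem stmt_3_general (B : ℕ → Polynomial ℝ)
    (h : ∀ γ : ℕ → ℝ, ClassicalMS γ → IsMultSeq B γ) :
    ∃ α : ℝ, 1 < α ∧ IsMultSeq B (fun k => α ^ k) ∧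
      IsMultSeq B (fun k => (1 / α) ^ k) :=
  ⟨2, one_lt_two, h _ (classicalMS_pow two_ne_zero), h _ (classicalMS_pow (by norm_num))⟩

theorem stmt_3 (B : ℕ → Polynomial ℝ) (hB : SimpleSet B)
    (h : ∀ γ : ℕ → ℝ, ClassicalMS γ → IsMultSeq B γ) :
    ∃ α : ℝ, 1 < α ∧ IsMultSeq B (fun k => α ^ k) ∧
      IsMultSeq B (fun k => (1 / α) ^ k) :=
  stmt_3_general B h
end

section
/- Suppose {γ_k} is a classical multiplier sequence with γ_1/γ_0 = γ_2/γ_1 = α for some real α (in particular γ_0 ≠ 0 and γ_1 ≠ 0). Then γ_n = γ_0 α^n for all n ≥ 0. -/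
open Polynomial

/-!
Applying γ to `X ^ m * (X + 1) ^ 3`, which has only real zeros, and cancelling `X ^ m` leaves
the real-rooted cubic `γ m + 3 γ (m+1) X + 3 γ (m+2) X² + γ (m+3) X³`. When its lower coefficients
are `g, 3gα, 3gα²` its discriminant is `-27 g² (γ (m+3) - gα³)²`, which a real-rooted cubic
forces to be nonnegative (if `γ (m+3) = 0` the quadratic left over has discriminant `-3 g² α²`
instead). Hence `γ (m+3) = gα³`, and the geometric pattern propagates by induction.
-/

open Finset

theorem RealRooted.of_X_pow_mul {p : ℝ[X]} {m : ℕ} (h : RealRooted (X ^ m * p)) :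
    RealRooted p := by
  rcases h with h | h
  · exact .inl ((mul_eq_zero.mp h).resolve_left (pow_ne_zero m X_ne_zero))
  · exact .inr fun z hz => h z (by rw [map_mul, hz, mul_zero])

theorem RealRooted.exists_eval_eq_zero {p : ℝ[X]} (h : RealRooted p) (hp : p.degree ≠ 0) :
    ∃ r : ℝ, p.eval r = 0 := by
  rcases h with rfl | h
  · exact ⟨0, eval_zero⟩
  obtain ⟨z, hz⟩ := IsAlgClosed.exists_root (p.map (algebraMap ℝ ℂ)) (by rwa [degree_map])
  have hz' : aeval z p = 0 := by rwa [IsRoot, eval_map_algebraMap] at hz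
  have hzr : ((z.re : ℝ) : ℂ) = z := Complex.ext (by simp) (by simp [h z hz'])
  rw [← hzr, ← Complex.coe_algebraMap, aeval_algebraMap_apply_eq_algebraMap_eval,
    map_eq_zero] at hz'
  exact ⟨z.re, hz'⟩

theorem RealRooted.discrim_nonneg {a b c : ℝ} (ha : a ≠ 0)
    (h : RealRooted (C a * X ^ 2 + C b * X + C c)) : 0 ≤ discrim a b c := by
  obtain ⟨r, hr⟩ := h.exists_eval_eq_zero (by rw [degree_quadratic ha]; decide)
  rw [discrim_eq_sq_of_quadratic_eq_zero (x := r) (by simpa [sq] using hr)]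
  positivity

theorem Cubic.discr_nonneg_of_realRooted {P : Cubic ℝ} (ha : P.a ≠ 0) (h : RealRooted P.toPoly) :
    0 ≤ P.discr := by
  obtain ⟨x, y, z, h3⟩ := (Cubic.splits_iff_roots_eq_three (φ := algebraMap ℝ ℂ) ha).mp
    (IsAlgClosed.splits _)
  have hreal : ∀ w ∈ (P.map (algebraMap ℝ ℂ)).roots, (w.re : ℂ) = w := by
    intro w hw
    rw [Cubic.map_roots, mem_roots (map_ne_zero (Cubic.ne_zero_of_a_ne_zero ha)), IsRoot,
      eval_map_algebraMap] at hw
    exact Complex.ext rfl ((h.resolve_left (Cubic.ne_zero_of_a_ne_zero ha) w hw).symm)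
  have hdiscr := Cubic.discr_eq_prod_three_roots ha h3
  rw [← hreal x (by simp [h3]), ← hreal y (by simp [h3]), ← hreal z (by simp [h3])] at hdiscr
  have : P.discr = (P.a * P.a * (x.re - y.re) * (x.re - z.re) * (y.re - z.re)) ^ 2 :=
    Complex.ofReal_injective (by simpa using hdiscr)
  rw [this]
  positivity

theorem eq_mul_pow_three_of_realRooted {u g α : ℝ} (hg : g ≠ 0)
    (h : RealRooted (C u * X ^ 3 + C (3 * (g * α ^ 2)) * X ^ 2 + C (3 * (g * α)) * X + C g)) :
    u = g * α ^ 3 := by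
  by_cases hu : u = 0
  · subst hu
    rcases eq_or_ne α 0 with rfl | hα
    · simp
    rw [C_0, zero_mul, zero_add] at h
    have hdiscrim : discrim (3 * (g * α ^ 2)) (3 * (g * α)) g = -3 * (g * α) ^ 2 := by
      rw [discrim]; ring
    have hnonneg := h.discrim_nonneg (by positivity)
    have hpos : 0 < (g * α) ^ 2 := by positivity
    linarith
  · have hdiscr : Cubic.discr ⟨u, 3 * (g * α ^ 2), 3 * (g * α), g⟩
        = -27 * (g * (u - g * α ^ 3)) ^ 2 := by
      rw [Cubic.discr]; ring
    have hnonneg := Cubic.discr_nonneg_of_realRooted (P := ⟨u, 3 * (g * α ^ 2), 3 * (g * α), g⟩) hu h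
    have hsq : (g * (u - g * α ^ 3)) ^ 2 = 0 := le_antisymm (by linarith) (sq_nonneg _)
    rw [pow_eq_zero_iff two_ne_zero, mul_eq_zero, sub_eq_zero] at hsq
    exact hsq.resolve_left hg

theorem ClassicalMS.realRooted_of_natDegree_le {γ : ℕ → ℝ} (hγ : ClassicalMS γ) {p : ℝ[X]}
    (hp : RealRooted p) {n : ℕ} (hn : p.natDegree ≤ n) :
    RealRooted (∑ k ∈ range (n + 1), C (p.coeff k * γ k) * X ^ k) :=
  hγ n p.coeff (by rwa [← as_sum_range_C_mul_X_pow' p (by omega : p.natDegree < n + 1)])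

theorem sum_coeff_X_pow_mul {R : Type*} [CommSemiring R] (γ : ℕ → R) (m d : ℕ) (q : R[X]) :
    ∑ k ∈ range (m + d + 1), C ((X ^ m * q).coeff k * γ k) * X ^ k
      = X ^ m * ∑ j ∈ range (d + 1), C (q.coeff j * γ (m + j)) * X ^ j := by
  rw [add_assoc, sum_range_add, mul_sum, sum_eq_zero fun k hk => ?vanish, zero_add]
  · refine sum_congr rfl fun j _ => ?_
    rw [coeff_X_pow_mul', if_pos (by omega), Nat.add_sub_cancel_left, pow_add]
    ring
  case vanish =>
    rw [coeff_X_pow_mul', if_neg (not_le.mpr (mem_range.mp hk)), zero_mul, C_0, zero_mul]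

theorem realRooted_X_pow_mul_X_add_one_pow (m n : ℕ) : RealRooted (X ^ m * (X + 1) ^ n) := by
  refine .inr fun z hz => ?_
  simp only [map_mul, map_pow, map_add, aeval_X, map_one, mul_eq_zero, pow_eq_zero_iff'] at hz
  rcases hz with ⟨rfl, -⟩ | ⟨hz, -⟩
  · rfl
  · simp [eq_neg_of_add_eq_zero_left hz]

theorem ClassicalMS.eq_mul_pow_three {γ : ℕ → ℝ} (hγ : ClassicalMS γ) {α : ℝ} {m : ℕ}
    (hm : γ m ≠ 0) (h1 : γ (m + 1) = γ m * α) (h2 : γ (m + 2) = γ m * α ^ 2) :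
    γ (m + 3) = γ m * α ^ 3 := by
  have hdeg : (X ^ m * (X + 1 : ℝ[X]) ^ 3).natDegree ≤ m + 3 := by compute_degree
  have h := hγ.realRooted_of_natDegree_le (realRooted_X_pow_mul_X_add_one_pow m 3) hdeg
  rw [sum_coeff_X_pow_mul] at h
  refine eq_mul_pow_three_of_realRooted hm (RealRooted.of_X_pow_mul (m := m) ?_)
  convert h using 2
  simp only [sum_range_succ, sum_range_zero, coeff_X_add_one_pow]
  rw [h1, h2]
  norm_num [Nat.choose]
  ring

theorem stmt_6 (γ : ℕ → ℝ) (hγ : ClassicalMS γ) (α : ℝ)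
    (h0 : γ 0 ≠ 0) (h1 : γ 1 ≠ 0)
    (hr1 : γ 1 / γ 0 = α) (hr2 : γ 2 / γ 1 = α) :
    ∀ n : ℕ, γ n = γ 0 * α ^ n := by
  have hα : α ≠ 0 := hr1 ▸ div_ne_zero h1 h0
  have hγ1 : γ 1 = γ 0 * α := by rw [← hr1, mul_div_cancel₀ _ h0]
  have hγ2 : γ 2 = γ 0 * α ^ 2 := by rw [sq, ← mul_assoc, ← hγ1, ← hr2, mul_div_cancel₀ _ h1]
  intro n
  induction n using Nat.strong_induction_on with
  | _ n ih =>
    match n, ih with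
    | 0, _ => simp
    | 1, _ => simpa using hγ1
    | 2, _ => exact hγ2
    | m + 3, ih =>
      have hm := ih m (by omega)
      have hm1 := ih (m + 1) (by omega)
      have hm2 := ih (m + 2) (by omega)
      rw [hγ.eq_mul_pow_three (α := α) (by rw [hm]; positivity) (by rw [hm1, hm]; ring)
        (by rw [hm2, hm]; ring), hm]
      ring
end

section
/- If {γ_k} is a classical multiplier sequence with γ_0 = γ_1 = γ_2 ≠ 0, then γ_k = γ_0 for all k. -/
open Polynomial

/-!
Apply the multiplier sequence to `x^m (x + 1)^3`, which has only real zeros. If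
`γ m = γ (m+1) = γ (m+2) = c ≠ 0` and `γ (m+3) = d`, the image is
`x^m (c (x + 1)^3 + (d - c) x^3)`. For `d ≠ c` the cubic factor vanishes wherever
`((1 + x) / x)^3 = (c - d) / c`, and two of the three cube roots of this nonzero number are
non-real, so it has a non-real zero. Hence `d = c`, and induction on `m` gives the theorem.
-/

namespace RealRooted

theorem mul {p q : ℝ[X]} (hp : RealRooted p) (hq : RealRooted q) : RealRooted (p * q) := by
  rcases hp with rfl | hp
  · simp [RealRooted]
  rcases hq with rfl | hq
  · simp [RealRooted]
  refine Or.inr fun z hz => ?_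
  rw [map_mul, mul_eq_zero] at hz
  exact hz.elim (hp z) (hq z)

theorem pow {p : ℝ[X]} (hp : RealRooted p) (n : ℕ) : RealRooted (p ^ n) := by
  induction n with
  | zero => exact Or.inr fun z hz => by simp at hz
  | succ n ih => rw [pow_succ]; exact ih.mul hp

theorem of_mul_left {p q : ℝ[X]} (h : RealRooted (p * q)) (hp : p ≠ 0) : RealRooted q := by
  rcases h with h | h
  · exact Or.inl ((mul_eq_zero.1 h).resolve_left hp)
  · exact Or.inr fun z hz => h z (by simp [hz])

end RealRooted

theorem realRooted_X_add_C (a : ℝ) : RealRooted (X + C a) := by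
  refine Or.inr fun z hz => ?_
  rw [map_add, aeval_X, aeval_C, add_eq_zero_iff_eq_neg] at hz
  simp [hz]

theorem Complex.exists_pow_three_eq_im_ne_zero {r : ℂ} (hr : r ≠ 0) :
    ∃ w : ℂ, w ^ 3 = r ∧ w.im ≠ 0 := by
  obtain ⟨w, hw⟩ := IsAlgClosed.exists_pow_nat_eq r (by norm_num : 0 < 3)
  by_cases hwim : w.im = 0
  · set ω := Complex.exp (2 * Real.pi * Complex.I / 3)
    have hω : IsPrimitiveRoot ω 3 := Complex.isPrimitiveRoot_exp 3 (by norm_num)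
    have hωim : ω.im ≠ 0 := by
      have : 0 < Real.sin (2 * Real.pi / 3) :=
        Real.sin_pos_of_pos_of_lt_pi (by positivity) (by linarith [Real.pi_pos])
      simpa [ω, Complex.exp_im] using this.ne'
    have hwre : w.re ≠ 0 := fun h => by
      have : w = 0 := Complex.ext h hwim
      simp [this] at hw; exact hr hw.symm
    refine ⟨w * ω, by rw [mul_pow, hω.pow_eq_one, mul_one, hw], ?_⟩
    simp [Complex.mul_im, hwim, hwre, hωim]
  · exact ⟨w, hw, hwim⟩

theorem not_realRooted_C_mul_X_add_one_pow_three_add {c e : ℝ} (hc : c ≠ 0) (he : e ≠ 0) :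
    ¬ RealRooted (C c * (X + 1) ^ 3 + C e * X ^ 3) := by
  obtain ⟨w, hw, hwim⟩ :=
    Complex.exists_pow_three_eq_im_ne_zero (r := -e / c) (by simp [hc, he])
  have hw1 : w - 1 ≠ 0 := fun h => hwim (by simpa using congrArg Complex.im h)
  -- `(1 + z) / z = w`, hence `c (1 + z)^3 + e z^3 = z^3 (c w^3 + e) = 0`.
  set z := (w - 1)⁻¹
  have hz : 1 + z = w * z := by
    have : z * (w - 1) = 1 := inv_mul_cancel₀ hw1
    linear_combination -this
  have hroot : aeval z (C c * (X + 1) ^ 3 + C e * X ^ 3) = 0 := by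
    have hcC : (c : ℂ) ≠ 0 := by exact_mod_cast hc
    simp only [map_add, map_mul, map_pow, aeval_C, aeval_X, map_one, Complex.coe_algebraMap]
    rw [add_comm z, hz, mul_pow, hw]
    field_simp
    ring
  have hzim : z.im ≠ 0 := by
    simp [z, Complex.inv_im, hwim, hw1]
  rintro (h | h)
  · simpa [hc] using congrArg (eval 0) h
  · exact hzim (h z hroot)

noncomputable def multiplierMap (γ : ℕ → ℝ) (p : ℝ[X]) : ℝ[X] :=
  ∑ k ∈ Finset.range (p.natDegree + 1), C (p.coeff k * γ k) * X ^ k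

theorem coeff_multiplierMap (γ : ℕ → ℝ) (p : ℝ[X]) (n : ℕ) :
    (multiplierMap γ p).coeff n = p.coeff n * γ n := by
  simp only [multiplierMap, finsetSum_coeff, coeff_C_mul_X_pow]
  rw [Finset.sum_ite_eq]
  split_ifs with h
  · rfl
  · rw [coeff_eq_zero_of_natDegree_lt (by simpa [Nat.lt_succ_iff] using h), zero_mul]

theorem multiplierMap_X_pow_mul (γ : ℕ → ℝ) (m : ℕ) (p : ℝ[X]) :
    multiplierMap γ (X ^ m * p) = X ^ m * multiplierMap (fun k => γ (m + k)) p := by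
  ext n
  simp only [coeff_multiplierMap, coeff_X_pow_mul']
  split_ifs with h
  · rw [Nat.add_sub_cancel' h]
  · rw [zero_mul]

theorem multiplierMap_X_add_one_pow_three (γ : ℕ → ℝ) :
    multiplierMap γ ((X + 1) ^ 3) =
      C (γ 0) + C (3 * γ 1) * X + C (3 * γ 2) * X ^ 2 + C (γ 3) * X ^ 3 := by
  ext n
  rw [coeff_multiplierMap, coeff_X_add_one_pow]
  simp only [coeff_add, coeff_C_mul, coeff_C, coeff_X, coeff_X_pow]
  rcases n with _ | _ | _ | _ | n <;> simp [Nat.choose_eq_zero_of_lt]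

theorem ClassicalMS.realRooted_multiplierMap {γ : ℕ → ℝ} (hγ : ClassicalMS γ) {p : ℝ[X]}
    (hp : RealRooted p) : RealRooted (multiplierMap γ p) :=
  hγ p.natDegree p.coeff (by rwa [← as_sum_range_C_mul_X_pow])

theorem ClassicalMS.apply_add_three_eq {γ : ℕ → ℝ} (hγ : ClassicalMS γ) {m : ℕ}
    (h1 : γ (m + 1) = γ m) (h2 : γ (m + 2) = γ m) (hm : γ m ≠ 0) : γ (m + 3) = γ m := by
  by_contra hne
  have himage : multiplierMap γ (X ^ m * (X + 1) ^ 3) =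
      X ^ m * (C (γ m) * (X + 1) ^ 3 + C (γ (m + 3) - γ m) * X ^ 3) := by
    rw [multiplierMap_X_pow_mul, multiplierMap_X_add_one_pow_three]
    simp only [add_zero, h1, h2, map_mul, map_sub, map_ofNat]
    ring
  have hreal : RealRooted (X ^ m * (X + 1) ^ 3 : ℝ[X]) := by
    have hX : RealRooted X := by simpa using realRooted_X_add_C 0
    have hX1 : RealRooted (X + 1) := by simpa using realRooted_X_add_C 1
    exact (hX.pow m).mul (hX1.pow 3)
  have := hγ.realRooted_multiplierMap hreal
  rw [himage] at this
  exact not_realRooted_C_mul_X_add_one_pow_three_add hm (sub_ne_zero.2 hne)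
    (this.of_mul_left (pow_ne_zero m X_ne_zero))

theorem stmt_7 (γ : ℕ → ℝ) (hγ : ClassicalMS γ)
    (h01 : γ 0 = γ 1) (h12 : γ 1 = γ 2) (h0 : γ 0 ≠ 0) :
    ∀ k : ℕ, γ k = γ 0 := by
  have h : ∀ k, γ k = γ 0 ∧ γ (k + 1) = γ 0 ∧ γ (k + 2) = γ 0 := by
    intro k
    induction k with
    | zero => exact ⟨rfl, h01.symm, h12.symm.trans h01.symm⟩
    | succ k ih =>
      obtain ⟨hk, hk1, hk2⟩ := ih
      refine ⟨hk1, hk2, ?_⟩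
      exact (hγ.apply_add_three_eq (hk1.trans hk.symm) (hk2.trans hk.symm) (hk ▸ h0)).trans hk
  exact fun k => (h k).1
end

section
/- Let {γ_k} be a sequence belonging to the intersection over all simple sets of polynomials Q of the set of Q-multiplier sequences. Then either {γ_k} is a constant sequence, or γ_k = 0 for all k ≥ 2. -/
open Polynomial

/-!
Any `f` of degree `j` and `g` of degree `k > j` lie in a common simple set, and expanding `f + g`
in it shows that `γ j • f + γ k • g` is real-rooted whenever `f + g` is. Taking `g = X ^ k - f`,
the polynomial `(γ j - γ k) • f + γ k • X ^ k` is real-rooted for every `f` of degree `j`. Choosing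
`f` so that it vanishes at a non-real point forces it to be zero, whence `γ k = 0` and `γ j = 0`.
So if `γ m ≠ 0` for some `m ≥ 2`: with `f = X ^ (m - 2) * (X ^ 2 + 1)`, which vanishes at `I`, every
`γ k` with `k > m` is nonzero; and `γ j = γ k` whenever `j < k`, `2 ≤ k` and `γ k ≠ 0`, since
otherwise `f` can be chosen to make that polynomial vanish at a non-real `z`.
-/

namespace RealRooted

theorem X_pow (k : ℕ) : RealRooted ((X : ℝ[X]) ^ k) := by
  refine Or.inr fun z hz => ?_
  rw [map_pow, aeval_X, pow_eq_zero_iff'] at hz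
  simp [hz.1]

theorem eq_zero_of_aeval_eq_zero {p : ℝ[X]} (hp : RealRooted p) {z : ℂ} (hz : z.im ≠ 0)
    (hpz : aeval z p = 0) : p = 0 :=
  hp.resolve_right fun h => hz (h z hpz)

end RealRooted

theorem exists_im_ne_zero_pow_eq_exp {θ : ℝ} (hθ : 0 < θ) {n : ℕ} (hθn : θ < n * Real.pi) :
    ∃ z : ℂ, z.im ≠ 0 ∧ z ^ n = Complex.exp (θ * Complex.I) := by
  have hn : (n : ℝ) ≠ 0 := by
    rintro hn
    rw [hn, zero_mul] at hθn
    exact hθn.not_gt hθ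
  have hn' : (n : ℂ) ≠ 0 := mod_cast hn
  refine ⟨Complex.exp ((θ / n : ℝ) * Complex.I), ?_, ?_⟩
  · rw [Complex.exp_ofReal_mul_I_im]
    refine (Real.sin_pos_of_pos_of_lt_pi (by positivity) ?_).ne'
    rwa [div_lt_iff₀' (by positivity)]
  · rw [← Complex.exp_nat_mul]
    push_cast
    rw [← mul_assoc, mul_div_cancel₀ _ hn']

theorem aeval_C_mul_X_add_C_eq {z : ℂ} (hz : z.im ≠ 0) (w : ℂ) :
    aeval z (C (w.im / z.im) * X + C (w.re - w.im / z.im * z.re)) = w := by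
  apply Complex.ext <;> simp
  field_simp

theorem exists_degree_eq_aeval_eq {z w : ℂ} (hz : z.im ≠ 0) (hw : w.im ≠ 0) {j : ℕ}
    (hj : 1 ≤ j) : ∃ f : ℝ[X], f.degree = j ∧ aeval z f = w := by
  obtain rfl | hj := hj.eq_or_lt
  · exact ⟨_, degree_linear (div_ne_zero hw hz), aeval_C_mul_X_add_C_eq hz w⟩
  · set u := w - z ^ j
    refine ⟨X ^ j + (C (u.im / z.im) * X + C (u.re - u.im / z.im * z.re)), ?_, ?_⟩
    · rw [degree_add_eq_left_of_degree_lt, degree_X_pow]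
      exact degree_linear_le.trans_lt (by rw [degree_X_pow]; exact_mod_cast hj)
    · rw [map_add, aeval_C_mul_X_add_C_eq hz u]
      simp [u]

theorem exists_nonreal_root_C_mul_add_C_mul_X_pow {c d : ℝ} (hc : c ≠ 0) (hd : d ≠ 0)
    {j k : ℕ} (hjk : j < k) (hk : 2 ≤ k) :
    ∃ z : ℂ, z.im ≠ 0 ∧ ∃ f : ℝ[X], f.degree = j ∧ aeval z (C c * f + C d * X ^ k) = 0 := by
  have hk' : (2 : ℝ) ≤ k := mod_cast hk
  have hc' : (c : ℂ) ≠ 0 := mod_cast hc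
  -- A constant `f` takes real values, so for `j = 0` we need `z ^ k` real and take `z ^ k = -1`;
  -- for `j ≥ 1` we take `z ^ k = I`, so that the required value of `f` at `z` is non-real.
  rcases Nat.eq_zero_or_pos j with rfl | hj
  · obtain ⟨z, hz, hzk⟩ :=
      exists_im_ne_zero_pow_eq_exp Real.pi_pos (n := k) (by nlinarith [Real.pi_pos])
    refine ⟨z, hz, C (d / c), degree_C (div_ne_zero hd hc), ?_⟩
    simp only [map_add, map_mul, aeval_C, map_pow, aeval_X, hzk, Complex.exp_pi_mul_I,
      Complex.coe_algebraMap, Complex.ofReal_div]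
    field_simp
    ring
  · obtain ⟨z, hz, hzk⟩ :=
      exists_im_ne_zero_pow_eq_exp (half_pos Real.pi_pos) (n := k) (by nlinarith [Real.pi_pos])
    obtain ⟨f, hf, hfz⟩ := exists_degree_eq_aeval_eq hz (w := -(d / c : ℝ) * Complex.I)
      (by simpa using div_ne_zero hd hc) hj
    have hI : Complex.exp ((Real.pi / 2 : ℝ) * Complex.I) = Complex.I := by
      rw [Complex.exp_mul_I, ← Complex.ofReal_cos, ← Complex.ofReal_sin, Real.cos_pi_div_two,
        Real.sin_pi_div_two]
      simp
    rw [hI] at hzk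
    refine ⟨z, hz, f, hf, ?_⟩
    simp only [map_add, map_mul, aeval_C, map_pow, aeval_X, hzk, hfz, Complex.coe_algebraMap,
      Complex.ofReal_div]
    field_simp
    ring

def IsUniversalMultSeq (γ : ℕ → ℝ) : Prop :=
  ∀ Q : ℕ → ℝ[X], SimpleSet Q → IsMultSeq Q γ

namespace IsUniversalMultSeq

variable {γ : ℕ → ℝ}

theorem realRooted_C_mul_add_C_mul (h : IsUniversalMultSeq γ) {j k : ℕ} (hjk : j < k)
    {f g : ℝ[X]} (hf : f.degree = j) (hg : g.degree = k) (hfg : RealRooted (f + g)) :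
    RealRooted (C (γ j) * f + C (γ k) * g) := by
  classical
  set Q : ℕ → ℝ[X] := Function.update (Function.update (X ^ ·) j f) k g
  have hQ : SimpleSet Q := by
    intro t
    simp only [Q, Function.update_apply]
    split_ifs with htk htj
    · rwa [htk]
    · rwa [htj]
    · exact degree_X_pow t
  have hsub : {j, k} ⊆ Finset.range (k + 1) := by
    simp [Finset.insert_subset_iff]
    omega
  set a : ℕ → ℝ := fun t => if t ∈ ({j, k} : Finset ℕ) then 1 else 0
  have hsum (c : ℕ → ℝ) :
      ∑ t ∈ Finset.range (k + 1), C (a t * c t) * Q t = C (c j) * f + C (c k) * g := by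
    simp only [a, ite_mul, one_mul, zero_mul, apply_ite C, map_zero, Finset.sum_ite_mem,
      Finset.inter_eq_right.mpr hsub, Finset.sum_pair hjk.ne, Q, Function.update_self,
      Function.update_of_ne hjk.ne]
  have hsum_one := hsum 1
  simp only [Pi.one_apply, mul_one, map_one, one_mul] at hsum_one
  rw [← hsum]
  exact h Q hQ k a (hsum_one ▸ hfg)

theorem realRooted_C_sub_mul_add_C_mul_X_pow (h : IsUniversalMultSeq γ) {j k : ℕ}
    (hjk : j < k) {f : ℝ[X]} (hf : f.degree = j) :
    RealRooted (C (γ j - γ k) * f + C (γ k) * X ^ k) := by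
  have hlt : f.degree < (X ^ k : ℝ[X]).degree := by
    rw [hf, degree_X_pow]
    exact_mod_cast hjk
  have hg : (X ^ k - f).degree = (k : WithBot ℕ) := by
    rw [degree_sub_eq_left_of_degree_lt hlt, degree_X_pow]
  convert h.realRooted_C_mul_add_C_mul hjk hf hg (by simpa using RealRooted.X_pow k) using 1
  simp only [map_sub]
  ring

theorem eq_zero_of_aeval_eq_zero (h : IsUniversalMultSeq γ) {j k : ℕ} (hjk : j < k)
    {f : ℝ[X]} (hf : f.degree = j) {z : ℂ} (hz : z.im ≠ 0)
    (hfz : aeval z (C (γ j - γ k) * f + C (γ k) * X ^ k) = 0) : γ j = 0 ∧ γ k = 0 := by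
  have hzero := (h.realRooted_C_sub_mul_add_C_mul_X_pow hjk hf).eq_zero_of_aeval_eq_zero hz hfz
  have hfk : f.coeff k = 0 := coeff_eq_zero_of_degree_lt (by rw [hf]; exact_mod_cast hjk)
  have hγk : γ k = 0 := by
    simpa only [coeff_add, coeff_C_mul, coeff_X_pow_self, hfk, mul_zero, mul_one, zero_add,
      coeff_zero]
      using congrArg (coeff · k) hzero
  have hf0 : f ≠ 0 := by
    rintro rfl
    simp at hf
  rw [hγk, sub_zero, map_zero, zero_mul, add_zero, mul_eq_zero, C_eq_zero] at hzero
  exact ⟨hzero.resolve_right hf0, hγk⟩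

theorem eq_of_lt (h : IsUniversalMultSeq γ) {j k : ℕ} (hjk : j < k) (hk : 2 ≤ k)
    (hγk : γ k ≠ 0) : γ j = γ k := by
  by_contra hne
  obtain ⟨z, hz, f, hf, hfz⟩ :=
    exists_nonreal_root_C_mul_add_C_mul_X_pow (sub_ne_zero.mpr hne) hγk hjk hk
  exact hγk (h.eq_zero_of_aeval_eq_zero hjk hf hz hfz).2

theorem ne_zero_of_lt (h : IsUniversalMultSeq γ) {m k : ℕ} (hmk : m < k) (hm : 2 ≤ m)
    (hγm : γ m ≠ 0) : γ k ≠ 0 := by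
  intro hγk
  have hf : (X ^ (m - 2) * (X ^ 2 + 1) : ℝ[X]).degree = m := by
    rw [degree_mul, degree_X_pow, ← C_1, degree_X_pow_add_C two_pos]
    norm_cast
    omega
  refine hγm (h.eq_zero_of_aeval_eq_zero hmk hf (z := Complex.I) (by simp) ?_).1
  simp [hγk]

end IsUniversalMultSeq

theorem stmt_12 (γ : ℕ → ℝ)
    (h : ∀ Q : ℕ → Polynomial ℝ, SimpleSet Q → IsMultSeq Q γ) :
    (∀ k : ℕ, γ k = γ 0) ∨ (∀ k : ℕ, 2 ≤ k → γ k = 0) := by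
  replace h : IsUniversalMultSeq γ := h
  refine or_iff_not_imp_right.mpr fun hγ => ?_
  push Not at hγ
  obtain ⟨m, hm, hγm⟩ := hγ
  have hγ_eq (k : ℕ) : γ k = γ m := by
    rcases lt_trichotomy k m with hkm | rfl | hmk
    · exact h.eq_of_lt hkm hm hγm
    · rfl
    · exact (h.eq_of_lt hmk (by omega) (h.ne_zero_of_lt hmk hm hγm)).symm
  exact fun k => (hγ_eq k).trans (hγ_eq 0).symm
end

section
/- Let α < 0 and let {γ_k} be a sequence of nonnegative reals that is a multiplier sequence with respect to the generalized Hermite basis H^(α). Then γ_{k+1} ≤ γ_k for all k ≥ 1. -/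
/-!
Write `k = m + 1` and `c = √(-α)`. The polynomial `(x + c)^(m+2)` is real-rooted, and in the
basis `H^(α)` it reads `H_{m+2} + (m+2) c H_{m+1} + (terms of degree < m)`: the `H_m` component
vanishes because `c² = -α` cancels the `x^m` term of `H_{m+2}`. Applying `γ` keeps it
real-rooted, and differentiating `m` times leaves a real-rooted quadratic whose discriminant is a
positive multiple of `γ_{m+1}² - γ_{m+2}²`.
-/

open Polynomial

/-- The generalized Hermite polynomials, satisfying the generating relation
$\sum_n H_n^{(\alpha)}(x) t^n/n! = e^{xt - \alpha t^2/2}$; in particular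
$H_0^{(\alpha)} = 1$ and $x^2 = H_2^{(\alpha)}(x) + \alpha H_0^{(\alpha)}(x)$. -/
noncomputable def genHermite (α : ℝ) (n : ℕ) : Polynomial ℝ :=
  ∑ k ∈ Finset.range (n / 2 + 1),
    Polynomial.C ((n.factorial : ℝ) * (-α / 2) ^ k /
      ((k.factorial : ℝ) * ((n - 2 * k).factorial : ℝ))) * Polynomial.X ^ (n - 2 * k)

namespace Polynomial

theorem realRooted_iff_splits {p : ℝ[X]} : RealRooted p ↔ p.Splits := by
  constructor
  · rintro (rfl | hreal)
    · exact Splits.zero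
    refine (IsAlgClosed.splits _).of_splits_map (algebraMap ℝ ℂ) fun z hz => ?_
    have hz : aeval z p = 0 := by
      rw [aeval_def, ← eval_map]
      exact (mem_roots'.mp hz).2
    exact ⟨z.re, Complex.ext rfl (hreal z hz).symm⟩
  · intro hp
    by_cases hp0 : p = 0
    · exact Or.inl hp0
    refine Or.inr fun z hz => ?_
    obtain ⟨x, rfl⟩ := hp.mem_range_of_isRoot hp0 (i := algebraMap ℝ ℂ)
      (by rwa [IsRoot, eval_map, ← aeval_def])
    simp

/-- By Rolle's theorem `p'` has at most one root fewer than `p`, counted with multiplicity. -/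
theorem Splits.derivative {p : ℝ[X]} (hp : p.Splits) : (derivative p).Splits := by
  have hp := splits_iff_card_roots.mp hp
  have := card_roots_le_derivative p
  have := natDegree_derivative_le p
  have := card_roots' (Polynomial.derivative p)
  exact splits_iff_card_roots.mpr (by omega)

theorem Splits.iterate_derivative {p : ℝ[X]} (hp : p.Splits) (n : ℕ) :
    (Polynomial.derivative^[n] p).Splits := by
  induction n with
  | zero => exact hp
  | succ n ih => rw [Function.iterate_succ_apply']; exact ih.derivative

theorem Splits.discrim_nonneg {q : ℝ[X]} (hq : q.Splits) (hdeg : q.natDegree ≤ 2) :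
    0 ≤ discrim (q.coeff 2) (q.coeff 1) (q.coeff 0) := by
  by_cases h2 : q.coeff 2 = 0
  · simp [discrim, h2, sq_nonneg]
  have hdeg : q.natDegree = 2 := natDegree_eq_of_le_of_coeff_ne_zero hdeg h2
  obtain ⟨x, hx⟩ := Multiset.exists_mem_of_ne_zero (hq.roots_ne_zero (by omega))
  have hroot : q.coeff 2 * (x * x) + q.coeff 1 * x + q.coeff 0 = 0 := by
    rw [← (mem_roots'.mp hx).2, eval_eq_sum_range' (n := 3) (by omega)]
    simp only [Finset.sum_range_succ, Finset.sum_range_zero]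
    ring
  rw [discrim_eq_sq_of_quadratic_eq_zero hroot]
  positivity

theorem Splits.newton_inequality_top {p : ℝ[X]} (hp : p.Splits) {n : ℕ}
    (hdeg : p.natDegree ≤ n + 2) :
    2 * (n + 2) * p.coeff (n + 2) * p.coeff n ≤ (n + 1) * p.coeff (n + 1) ^ 2 := by
  have hdisc := (hp.iterate_derivative n).discrim_nonneg
    ((natDegree_iterate_derivative p n).trans (by omega))
  have hfac (k : ℕ) : (k.factorial : ℝ) * (n + k).descFactorial n = (n + k).factorial := by
    exact_mod_cast (by simpa using Nat.factorial_mul_descFactorial (Nat.le_add_right n k))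
  have d0 : ((n.descFactorial n : ℕ) : ℝ) = n.factorial := by simpa using hfac 0
  have d1 : ((n + 1).descFactorial n : ℝ) = (n + 1) * n.factorial := by
    simpa [Nat.factorial_succ] using hfac 1
  have d2 : ((n + 2).descFactorial n : ℝ) = (n + 2) * (n + 1) * n.factorial / 2 := by
    have := hfac 2
    push_cast [Nat.factorial_succ, Nat.factorial_zero] at this
    linarith
  simp only [discrim, coeff_iterate_derivative, nsmul_eq_mul, Nat.add_comm _ n, Nat.add_zero,
    d0, d1, d2] at hdisc
  have hF : (0 : ℝ) < (n + 1) * n.factorial ^ 2 := by positivity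
  have hfactored : 0 ≤ (n + 1) * n.factorial ^ 2 *
      ((n + 1) * p.coeff (n + 1) ^ 2 - 2 * (n + 2) * p.coeff (n + 2) * p.coeff n) := by
    linear_combination hdisc
  linarith [(mul_nonneg_iff_of_pos_left hF).mp hfactored]

end Polynomial

open Finset

namespace SimpleSet

variable {B : ℕ → ℝ[X]} (hB : SimpleSet B)
include hB

theorem coeff_eq_zero_of_lt {j i : ℕ} (h : j < i) : (B j).coeff i = 0 :=
  coeff_eq_zero_of_degree_lt (by rw [hB j]; exact_mod_cast h)

theorem coeff_sum_eq_zero (d : ℕ → ℝ) {N i : ℕ} (h : N ≤ i) :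
    (∑ j ∈ range N, C (d j) * B j).coeff i = 0 := by
  rw [finsetSum_coeff]
  refine sum_eq_zero fun j hj => ?_
  rw [coeff_C_mul, hB.coeff_eq_zero_of_lt ((mem_range.mp hj).trans_le h), mul_zero]

theorem exists_sum_eq {n : ℕ} {p : ℝ[X]} (hp : p.degree < n) :
    ∃ a : ℕ → ℝ, ∑ k ∈ range n, C (a k) * B k = p := by
  induction n generalizing p with
  | zero => exact ⟨0, by simp_all⟩
  | succ n ih =>
    have hlead : (B n).coeff n ≠ 0 := coeff_ne_zero_of_eq_degree (hB n)
    set t := p.coeff n / (B n).coeff n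
    obtain ⟨a, ha⟩ := ih (p := p - C t * B n) <| by
      rw [degree_lt_iff_coeff_zero] at hp ⊢
      intro i hi
      rw [coeff_sub, coeff_C_mul]
      rcases hi.eq_or_lt with rfl | hi
      · simp [t, hlead]
      · rw [hp i hi, hB.coeff_eq_zero_of_lt hi, mul_zero, sub_zero]
    refine ⟨Function.update a n t, ?_⟩
    rw [sum_range_succ, Function.update_self,
      sum_congr rfl fun k hk => by rw [Function.update_of_ne (mem_range.mp hk).ne], ha]
    ring

end SimpleSet

section genHermite

variable (α : ℝ)

theorem coeff_genHermite (n i : ℕ) :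
    (genHermite α n).coeff i = ∑ k ∈ range (n / 2 + 1), if i = n - 2 * k then
      (n.factorial : ℝ) * (-α / 2) ^ k / (k.factorial * (n - 2 * k).factorial) else 0 := by
  simp only [genHermite, finsetSum_coeff, coeff_C_mul, coeff_X_pow, mul_ite, mul_one, mul_zero]

theorem genHermite_coeff_of_lt {n i : ℕ} (h : n < i) : (genHermite α n).coeff i = 0 := by
  rw [coeff_genHermite]
  exact sum_eq_zero fun k _ => if_neg (by omega)

theorem genHermite_coeff_self (n : ℕ) : (genHermite α n).coeff n = 1 := by
  rw [coeff_genHermite, sum_eq_single_of_mem 0 (by simp) fun k hk hk0 => if_neg (by grind)]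
  simp [Nat.factorial_ne_zero]

theorem genHermite_coeff_succ (n : ℕ) : (genHermite α (n + 1)).coeff n = 0 := by
  rw [coeff_genHermite]
  exact sum_eq_zero fun k hk => if_neg (by grind)

theorem genHermite_coeff_add_two (n : ℕ) :
    (genHermite α (n + 2)).coeff n = -α * (n + 2) * (n + 1) / 2 := by
  rw [coeff_genHermite, sum_eq_single_of_mem 1 (by simp) fun k hk hk1 => if_neg (by grind)]
  simp only [show n + 2 - 2 * 1 = n by omega, Nat.factorial_succ]
  push_cast
  field_simp
  ring

theorem simpleSet_genHermite : SimpleSet (genHermite α) := fun n =>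
  degree_eq_of_le_of_coeff_ne_zero
    ((degree_le_iff_coeff_zero _ _).mpr fun _ h => genHermite_coeff_of_lt α (by exact_mod_cast h))
    (by simp [genHermite_coeff_self])

end genHermite

section genHermiteSum

variable (α : ℝ) (d : ℕ → ℝ) (m : ℕ)

theorem coeff_sum_genHermite_add_two :
    (∑ j ∈ range (m + 3), C (d j) * genHermite α j).coeff (m + 2) = d (m + 2) := by
  rw [sum_range_succ, coeff_add, (simpleSet_genHermite α).coeff_sum_eq_zero d le_rfl,
    coeff_C_mul, genHermite_coeff_self, zero_add, mul_one]

theorem coeff_sum_genHermite_add_one :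
    (∑ j ∈ range (m + 3), C (d j) * genHermite α j).coeff (m + 1) = d (m + 1) := by
  rw [sum_range_succ, sum_range_succ, coeff_add, coeff_add,
    (simpleSet_genHermite α).coeff_sum_eq_zero d le_rfl]
  simp only [coeff_C_mul, genHermite_coeff_self, genHermite_coeff_succ]
  ring

theorem coeff_sum_genHermite_self :
    (∑ j ∈ range (m + 3), C (d j) * genHermite α j).coeff m
      = d m - α * (m + 2) * (m + 1) / 2 * d (m + 2) := by
  rw [sum_range_succ, sum_range_succ, sum_range_succ, coeff_add, coeff_add, coeff_add,
    (simpleSet_genHermite α).coeff_sum_eq_zero d le_rfl]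
  simp only [coeff_C_mul, genHermite_coeff_self, genHermite_coeff_succ, genHermite_coeff_add_two]
  ring

end genHermiteSum

theorem stmt_15 (α : ℝ) (hα : α < 0) (γ : ℕ → ℝ) (hpos : ∀ k, 0 ≤ γ k)
    (hγ : IsMultSeq (genHermite α) γ) :
    ∀ k : ℕ, 1 ≤ k → γ (k + 1) ≤ γ k := by
  intro k hk
  obtain ⟨m, rfl⟩ : ∃ m, k = m + 1 := ⟨k - 1, by omega⟩
  obtain ⟨c, hc⟩ : ∃ c, c ^ 2 = -α := ⟨√(-α), Real.sq_sqrt (by linarith)⟩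
  set P : ℝ[X] := (X + C c) ^ (m + 2)
  obtain ⟨b, hb⟩ := (simpleSet_genHermite α).exists_sum_eq (n := m + 3) (p := P) (by
    rw [degree_pow, degree_X_add_C, nsmul_one]; exact_mod_cast Nat.lt_succ_self _)
  have hb2 : b (m + 2) = 1 := by
    rw [← coeff_sum_genHermite_add_two α b m, hb, coeff_X_add_C_pow]; simp
  have hb1 : b (m + 1) = (m + 2) * c := by
    rw [← coeff_sum_genHermite_add_one α b m, hb, coeff_X_add_C_pow]
    simp [show m + 2 - (m + 1) = 1 by omega]; ring
  have hb0 : b m = 0 := by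
    have h := coeff_sum_genHermite_self α b m
    rw [hb, coeff_X_add_C_pow, show m + 2 - m = 2 by omega, hc, hb2, Nat.choose_symm_add,
      Nat.cast_choose_two] at h
    push_cast at h
    linear_combination -h
  have hPreal : RealRooted P := realRooted_iff_splits.mpr ((Splits.X_add_C c).pow _)
  set Q := ∑ j ∈ range (m + 3), C (b j * γ j) * genHermite α j
  have hQ : Q.Splits := realRooted_iff_splits.mp (hγ (m + 2) b (hb ▸ hPreal))
  have hQdeg : Q.natDegree ≤ m + 2 := natDegree_le_iff_coeff_eq_zero.mpr fun i hi =>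
    (simpleSet_genHermite α).coeff_sum_eq_zero _ (by exact_mod_cast hi)
  have hnewton := hQ.newton_inequality_top hQdeg
  rw [coeff_sum_genHermite_add_two, coeff_sum_genHermite_add_one, coeff_sum_genHermite_self,
    hb2, hb1, hb0] at hnewton
  have hsq : γ (m + 2) ^ 2 ≤ γ (m + 1) ^ 2 := by
    have hscale : (0 : ℝ) < (m + 1) * (m + 2) ^ 2 * -α :=
      mul_pos (by positivity) (neg_pos.mpr hα)
    refine le_of_mul_le_mul_left ?_ hscale
    linear_combination hnewton + (m + 1) * (m + 2) ^ 2 * γ (m + 1) ^ 2 * hc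
  exact (pow_le_pow_iff_left₀ (hpos _) (hpos _) two_ne_zero).mp hsq
end

section
/- Let Q and B be simple sets of polynomials, let α > 1 be such that {α^k} and {(1/α)^k} are both B-multiplier sequences. Write q_k(x) = Σ_{j=0}^k a_{k,j} b_j(x) and define q̂_k(x) = Σ_{j=0}^k α^j a_{k,j} b_j(x). Then every Q-multiplier sequence is also a Q̂-multiplier sequence, where Q̂ = {q̂_k}. -/
open Polynomial

/-! Scaling the `B`-coefficients by `α ^ j` is invertible, with inverse the scaling by
`(1 / α) ^ j`, and both scalings preserve real-rootedness by hypothesis. Since the scaling sends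
`∑ c_k q_k` to `∑ c_k q̂_k`, the combination `∑ c_k q̂_k` is real-rooted exactly when `∑ c_k q_k`
is, and the `Q`-multiplier property of `γ` transfers to `Q̂`. -/

open Finset

lemma sum_C_mul_sum_range_C_mul (B : ℕ → ℝ[X]) (a : ℕ → ℕ → ℝ) (c : ℕ → ℝ) (n : ℕ) :
    ∑ k ∈ range (n + 1), C (c k) * ∑ j ∈ range (k + 1), C (a k j) * B j
      = ∑ j ∈ range (n + 1), C (∑ k ∈ Ico j (n + 1), c k * a k j) * B j := by
  simp_rw [mul_sum, ← mul_assoc, ← C_mul]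
  rw [sum_comm' (t' := range (n + 1)) (s' := fun j => Ico j (n + 1))
    (by intro k j; simp only [mem_range, mem_Ico]; omega)]
  simp_rw [map_sum, sum_mul]

lemma IsMultSeq.realRooted_sum_mul_iff {B : ℕ → ℝ[X]} {γ δ : ℕ → ℝ}
    (hγ : IsMultSeq B γ) (hδ : IsMultSeq B δ) (hγδ : ∀ j, γ j * δ j = 1)
    (n : ℕ) (d : ℕ → ℝ) :
    RealRooted (∑ j ∈ range (n + 1), C (γ j * d j) * B j)
      ↔ RealRooted (∑ j ∈ range (n + 1), C (d j) * B j) := by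
  constructor
  · intro h
    convert hδ n (fun j => γ j * d j) h using 4 with j
    rw [mul_right_comm, hγδ, one_mul]
  · intro h
    simpa only [mul_comm (d _)] using hγ n d h

theorem stmt_19_general (Q B : ℕ → Polynomial ℝ)
    (α : ℝ) (hα : 1 < α)
    (h1 : IsMultSeq B (fun k => α ^ k)) (h2 : IsMultSeq B (fun k => (1 / α) ^ k))
    (a : ℕ → ℕ → ℝ)
    (ha : ∀ k, Q k = ∑ j ∈ Finset.range (k + 1), Polynomial.C (a k j) * B j)
    (Qhat : ℕ → Polynomial ℝ)
    (hQhat : ∀ k, Qhat k = ∑ j ∈ Finset.range (k + 1),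
      Polynomial.C (α ^ j * a k j) * B j)
    (γ : ℕ → ℝ) (hγ : IsMultSeq Q γ) :
    IsMultSeq Qhat γ := by
  intro n c hc
  let coeff (c : ℕ → ℝ) (j : ℕ) : ℝ := ∑ k ∈ Ico j (n + 1), c k * a k j
  have expand (c : ℕ → ℝ) :
      ∑ k ∈ range (n + 1), C (c k) * Q k = ∑ j ∈ range (n + 1), C (coeff c j) * B j := by
    simp only [ha, sum_C_mul_sum_range_C_mul, coeff]
  have expandHat (c : ℕ → ℝ) : ∑ k ∈ range (n + 1), C (c k) * Qhat k
      = ∑ j ∈ range (n + 1), C (α ^ j * coeff c j) * B j := by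
    rw [funext hQhat, sum_C_mul_sum_range_C_mul]
    simp only [coeff, mul_sum, mul_left_comm]
  have hscale := h1.realRooted_sum_mul_iff h2
    (fun j => by rw [← mul_pow, mul_one_div_cancel (by positivity)]; exact one_pow j) n
  rw [expandHat, hscale, ← expand] at hc ⊢
  exact hγ n c hc

theorem stmt_19 (Q B : ℕ → Polynomial ℝ) (hQ : SimpleSet Q) (hB : SimpleSet B)
    (α : ℝ) (hα : 1 < α)
    (h1 : IsMultSeq B (fun k => α ^ k)) (h2 : IsMultSeq B (fun k => (1 / α) ^ k))
    (a : ℕ → ℕ → ℝ)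
    (ha : ∀ k, Q k = ∑ j ∈ Finset.range (k + 1), Polynomial.C (a k j) * B j)
    (Qhat : ℕ → Polynomial ℝ)
    (hQhat : ∀ k, Qhat k = ∑ j ∈ Finset.range (k + 1),
      Polynomial.C (α ^ j * a k j) * B j)
    (γ : ℕ → ℝ) (hγ : IsMultSeq Q γ) :
    IsMultSeq Qhat γ :=
  stmt_19_general Q B α hα h1 h2 a ha Qhat hQhat γ hγ
end
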